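/- arXiv:2101.03905 — 4 statements merged into one kernel-verified Lean document; each statement's English description precedes it below -/
import Mathlib

section
/- Let n ≥ 3, p an odd prime, q = p^s with s ≥ 1, and let t be an integer. If 0 ≤ a < q and the inequalities ((n-2)(p-1)/2)·(q/p) ≤ a − t q ≤ ((n-2)(p-1)/2 + n − 2 + p)·(q/p) − n hold, then −t lies in the set {n_0 − 1, n_0, …, n_0 + ⌈(n-2)/p⌉}, where n_0 = ⌈(n-2)(p-1)/(2p)⌉. -/
/-- Achinger's spinor occurrence inequalities force
`−t ∈ {n_0 − 1, …, n_0 + ⌈(n-2)/p⌉}` where `n_0 = ⌈(n-2)(p-1)/(2p)⌉`. -/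
theorem stmt3 (n p s : ℕ) (hn : 3 ≤ n) (hp : p.Prime) (hodd : Odd p) (hs : 1 ≤ s)
    (a t : ℤ) (ha0 : 0 ≤ a) (haq : a < (p : ℤ) ^ s)
    (h1 : (((n : ℚ) - 2) * ((p : ℚ) - 1) / 2) * ((p : ℚ) ^ s / (p : ℚ)) ≤
      (a : ℚ) - (t : ℚ) * (p : ℚ) ^ s)
    (h2 : (a : ℚ) - (t : ℚ) * (p : ℚ) ^ s ≤
      (((n : ℚ) - 2) * ((p : ℚ) - 1) / 2 + ((n : ℚ) - 2) + (p : ℚ)) *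
        ((p : ℚ) ^ s / (p : ℚ)) - (n : ℚ)) :
    ⌈((n : ℚ) - 2) * ((p : ℚ) - 1) / (2 * (p : ℚ))⌉ - 1 ≤ -t ∧
      -t ≤ ⌈((n : ℚ) - 2) * ((p : ℚ) - 1) / (2 * (p : ℚ))⌉ + ⌈((n : ℚ) - 2) / (p : ℚ)⌉ := by
  obtain ⟨s', rfl⟩ : ∃ s', s = s' + 1 := ⟨s - 1, by omega⟩
  have hp2 : (2:ℚ) ≤ (p:ℚ) := by exact_mod_cast hp.two_le
  have hPpos : (0:ℚ) < (p:ℚ) := by linarith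
  have hm : (0:ℚ) < (p:ℚ)^s' := by positivity
  have haq' : (a:ℚ) < (p:ℚ)^(s'+1) := by exact_mod_cast haq
  have ha0' : (0:ℚ) ≤ (a:ℚ) := by exact_mod_cast ha0
  have hdiv : (p:ℚ)^(s'+1) / (p:ℚ) = (p:ℚ)^s' := by
    rw [pow_succ]; field_simp
  rw [hdiv] at h1 h2
  have hq : ((p:ℚ)^(s'+1)) = (p:ℚ)^s' * (p:ℚ) := by ring
  rw [hq] at h1 h2 haq'
  have hn3 : (3:ℚ) ≤ (n:ℚ) := by exact_mod_cast hn
  constructor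
  · have hceil : ⌈((n : ℚ) - 2) * ((p : ℚ) - 1) / (2 * (p : ℚ))⌉ ≤ -t + 1 := by
      apply Int.ceil_le.mpr
      push_cast
      rw [div_le_iff₀ (by positivity)]
      nlinarith [mul_pos hm hPpos]
    omega
  · have hXle := Int.le_ceil (((n : ℚ) - 2) * ((p : ℚ) - 1) / (2 * (p : ℚ)))
    have hYle := Int.le_ceil (((n : ℚ) - 2) / (p : ℚ))
    have key : (-t:ℚ) < ((n : ℚ) - 2) * ((p : ℚ) - 1) / (2 * (p : ℚ)) +
        ((n : ℚ) - 2) / (p : ℚ) + 1 := by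
      have h3 : (-t:ℚ) * ((p:ℚ)^s' * (p:ℚ)) <
          ((((n : ℚ) - 2) * ((p : ℚ) - 1) / 2 + ((n : ℚ) - 2) + (p : ℚ)) * (p:ℚ)^s') := by
        nlinarith
      have h4 : (-t:ℚ) <
          ((((n : ℚ) - 2) * ((p : ℚ) - 1) / 2 + ((n : ℚ) - 2) + (p : ℚ)) * (p:ℚ)^s')
            / ((p:ℚ)^s' * (p:ℚ)) := by
        rw [lt_div_iff₀ (by positivity)]; exact h3
      have h5 : ((((n : ℚ) - 2) * ((p : ℚ) - 1) / 2 + ((n : ℚ) - 2) + (p : ℚ)) * (p:ℚ)^s')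
            / ((p:ℚ)^s' * (p:ℚ)) = ((n : ℚ) - 2) * ((p : ℚ) - 1) / (2 * (p : ℚ)) +
        ((n : ℚ) - 2) / (p : ℚ) + 1 := by
        field_simp
      linarith [h4, h5 ▸ h4]
    have hfin : (-t:ℚ) < ((⌈((n : ℚ) - 2) * ((p : ℚ) - 1) / (2 * (p : ℚ))⌉ : ℚ) +
        (⌈((n : ℚ) - 2) / (p : ℚ)⌉ : ℚ)) + 1 := by linarith
    have : (-t:ℤ) < ⌈((n : ℚ) - 2) * ((p : ℚ) - 1) / (2 * (p : ℚ))⌉ +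
        ⌈((n : ℚ) - 2) / (p : ℚ)⌉ + 1 := by exact_mod_cast hfin
    omega
end

section
/- Let n ≥ 4 be even, p an odd prime with p ≥ n − 2, n_0 = ⌈(n-2)(p-1)/(2p)⌉, q = p^s, and 0 ≤ a < q. If −t = n_0 + 1 and the spinor occurrence inequalities ((n-2)(p-1)/2)(q/p) ≤ a − tq ≤ ((n-2)(p-1)/2 + n − 2 + p)(q/p) − n hold, then a/q < (n-2)/(2p). -/
/-- For `n` even, `p ≥ n−2`, if the spinor occurrence inequalities hold with
`−t = n_0 + 1` then `a/q < (n−2)/(2p)`. -/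
theorem stmt5 (n p s : ℕ) (hn : 4 ≤ n) (hne : Even n) (hp : p.Prime) (hodd : Odd p)
    (hpn : n - 2 ≤ p) (hs : 1 ≤ s) (a t : ℤ) (ha0 : 0 ≤ a) (haq : a < (p : ℤ) ^ s)
    (ht : -t = ⌈((n : ℚ) - 2) * ((p : ℚ) - 1) / (2 * (p : ℚ))⌉ + 1)
    (h1 : (((n : ℚ) - 2) * ((p : ℚ) - 1) / 2) * ((p : ℚ) ^ s / (p : ℚ)) ≤
      (a : ℚ) - (t : ℚ) * (p : ℚ) ^ s)
    (h2 : (a : ℚ) - (t : ℚ) * (p : ℚ) ^ s ≤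
      (((n : ℚ) - 2) * ((p : ℚ) - 1) / 2 + ((n : ℚ) - 2) + (p : ℚ)) *
        ((p : ℚ) ^ s / (p : ℚ)) - (n : ℚ)) :
    (a : ℚ) / (p : ℚ) ^ s < ((n : ℚ) - 2) / (2 * (p : ℚ)) := by
  obtain ⟨k, hk⟩ := hne
  have hk2 : 2 ≤ k := by omega
  have hp0 : (0:ℚ) < p := by exact_mod_cast hp.pos
  have hq0 : (0:ℚ) < (p:ℚ) ^ s := by positivity
  have hpn' : (n:ℚ) ≤ (p:ℚ) + 2 := by exact_mod_cast (by omega : n ≤ p + 2)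
  have hn' : (n:ℚ) = 2 * (k:ℚ) := by exact_mod_cast (by omega : n = 2 * k)
  have hk' : (2:ℚ) ≤ (k:ℚ) := by exact_mod_cast hk2
  -- compute the ceiling
  have hceil : ⌈((n : ℚ) - 2) * ((p : ℚ) - 1) / (2 * (p : ℚ))⌉ = (k:ℤ) - 1 := by
    rw [Int.ceil_eq_iff]
    constructor
    · push_cast
      rw [lt_div_iff₀ (by positivity)]
      nlinarith
    · push_cast
      rw [div_le_iff₀ (by positivity)]
      nlinarith
  have htk : (t:ℚ) = -(k:ℚ) := by
    have : t = -(k:ℤ) := by omega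
    rw [this]; push_cast; ring
  rw [htk] at h2
  have hqp : (p:ℚ) ^ s / (p:ℚ) * (p:ℚ) = (p:ℚ) ^ s := div_mul_cancel₀ _ (ne_of_gt hp0)
  have h2' := mul_le_mul_of_nonneg_right h2 (le_of_lt hp0)
  have hring : ((((n : ℚ) - 2) * ((p : ℚ) - 1) / 2 + ((n : ℚ) - 2) + (p : ℚ)) *
        ((p : ℚ) ^ s / (p : ℚ)) - (n : ℚ)) * (p:ℚ) =
      (((n : ℚ) - 2) * ((p : ℚ) - 1) / 2 + ((n : ℚ) - 2) + (p : ℚ)) *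
        ((p : ℚ) ^ s / (p : ℚ) * (p:ℚ)) - (n : ℚ) * (p:ℚ) := by ring
  rw [hring, hqp, hn'] at h2'
  have hkp : (0:ℚ) < (k:ℚ) * (p:ℚ) := by positivity
  rw [div_lt_div_iff₀ hq0 (by positivity), hn']
  nlinarith [h2', hkp]
end

section
/- Let n ≥ 3 be odd, p an odd prime with p ≥ n − 2, n_0 = (n-1)/2, q = p^s, and 0 ≤ a < q. Then there is no integer t with −t = n_0 + 1 satisfying ((n-2)(p-1)/2)(q/p) ≤ a − tq ≤ ((n-2)(p-1)/2 + n − 2 + p)(q/p) − n. (Equivalently, μ^s_{−n_0−1}(a) = 0.) -/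
/-- For `n` odd, `p ≥ n−2`, there is no `t` with `−t = n_0 + 1` satisfying the spinor
occurrence inequalities (i.e. `μ^s_{−n_0−1}(a) = 0`). -/
theorem stmt6 (n p s : ℕ) (hn : 3 ≤ n) (hno : Odd n) (hp : p.Prime) (hodd : Odd p)
    (hpn : n - 2 ≤ p) (hs : 1 ≤ s) (a : ℤ) (ha0 : 0 ≤ a) (haq : a < (p : ℤ) ^ s) :
    ¬ ∃ t : ℤ, -t = ((n : ℤ) - 1) / 2 + 1 ∧
      (((n : ℚ) - 2) * ((p : ℚ) - 1) / 2) * ((p : ℚ) ^ s / (p : ℚ)) ≤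
        (a : ℚ) - (t : ℚ) * (p : ℚ) ^ s ∧
      (a : ℚ) - (t : ℚ) * (p : ℚ) ^ s ≤
        (((n : ℚ) - 2) * ((p : ℚ) - 1) / 2 + ((n : ℚ) - 2) + (p : ℚ)) *
          ((p : ℚ) ^ s / (p : ℚ)) - (n : ℚ) := by
  rintro ⟨t, ht, h1, h2⟩
  obtain ⟨m, hm⟩ := hno
  have hm1 : 1 ≤ m := by omega
  -- t = -(m+1)
  have htval : t = -((m : ℤ) + 1) := by
    have : ((n : ℤ) - 1) / 2 = (m : ℤ) := by
      have : (n : ℤ) = 2 * m + 1 := by exact_mod_cast congrArg (Nat.cast : ℕ → ℤ) hm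
      omega
    omega
  obtain ⟨s', hs'⟩ : ∃ s', s = s' + 1 := ⟨s - 1, by omega⟩
  have hp3 : 3 ≤ p := by
    rcases hodd with ⟨k, hk⟩
    have := hp.two_le
    omega
  have hpQ : (3 : ℚ) ≤ (p : ℚ) := by exact_mod_cast hp3
  have hpm : ((2 : ℚ) * m - 1) ≤ (p : ℚ) := by
    have h : 2 * m ≤ p + 1 := by omega
    have : ((2 * m : ℕ) : ℚ) ≤ ((p + 1 : ℕ) : ℚ) := by exact_mod_cast h
    push_cast at this
    linarith
  have hP1 : (1 : ℚ) ≤ (p : ℚ) ^ s' := one_le_pow₀ (by linarith)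
  have hps : ((p : ℚ) ^ s / (p : ℚ)) = (p : ℚ) ^ s' := by
    rw [hs', pow_succ]
    field_simp
  have haQ : (0 : ℚ) ≤ (a : ℚ) := by exact_mod_cast ha0
  have hnQ : (n : ℚ) = 2 * m + 1 := by exact_mod_cast congrArg (Nat.cast : ℕ → ℚ) hm
  have htQ : (t : ℚ) = -((m : ℚ) + 1) := by exact_mod_cast congrArg (Int.cast : ℤ → ℚ) htval
  have hsQ : (p : ℚ) ^ s = (p : ℚ) ^ s' * p := by rw [hs', pow_succ]
  rw [hps, hnQ, htQ, hsQ] at h2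
  have hmQ : (1 : ℚ) ≤ (m : ℚ) := by exact_mod_cast hm1
  nlinarith [mul_le_mul_of_nonneg_right hpm (le_trans zero_le_one hP1)]
end

section
/- Let n ≥ 1 and define f: [n-1, n] → ℝ by f(x) = 2(n−x)^n / n!. If x ∈ [n-1, n) and q = p^s, and L^s(a) := Y_{q−a−n} for 0 ≤ a < q (with Y_m as below), then lim_{q→∞} L^s(⌊xq⌋ − (n−1)q)/q^n = 2(n−x)^n/n!. In particular this limit is strictly positive for x < n and equals 0 at x = n. -/
open Filter Finset

/-- `Y_m = C(m+n+1, n+1) − C(m+n−1, n+1)` for `m ≥ 0`, and `0` for `m < 0`. -/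
noncomputable def Yfun (n : ℕ) (m : ℤ) : ℝ :=
  if 0 ≤ m then
    ((m.toNat + n + 1).choose (n + 1) : ℝ) - ((m.toNat + n - 1).choose (n + 1) : ℝ)
  else 0

lemma castAsc (M k : ℕ) : (M.ascFactorial k : ℝ) = ∏ i ∈ Finset.range k, ((M : ℝ) + i) := by
  induction k with
  | zero => simp
  | succ k ih =>
    rw [Nat.ascFactorial_succ, Finset.prod_range_succ, ← ih]
    push_cast; ring

lemma pascal2 (M n : ℕ) (hn : 1 ≤ n) :
    (M + n + 1).choose (n + 1) =
      (M + n).choose n + (M + n - 1).choose n + (M + n - 1).choose (n + 1) := by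
  cases n with
  | zero => omega
  | succ k =>
    simp only [← Nat.add_assoc, Nat.add_sub_cancel]
    simp only [Nat.choose_succ_succ, Nat.succ_eq_add_one]
    omega

lemma key (M n : ℕ) (hn : 1 ≤ n) :
    ((M + n + 1).choose (n + 1) : ℝ) - ((M + n - 1).choose (n + 1) : ℝ)
      = ((∏ i ∈ Finset.range n, ((M : ℝ) + 1 + i)) + ∏ i ∈ Finset.range n, ((M : ℝ) + i))
        / (n.factorial : ℝ) := by
  have hfac : (0 : ℝ) < (n.factorial : ℝ) := by exact_mod_cast n.factorial_pos
  have hA : ((M + n).choose n : ℝ) * (n.factorial : ℝ) = ∏ i ∈ Finset.range n, ((M : ℝ) + 1 + i) := by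
    have h := Nat.ascFactorial_eq_factorial_mul_choose M n
    have h2 := castAsc (M + 1) n
    rw [h] at h2
    push_cast at h2
    rw [mul_comm]
    exact h2
  have hB : ((M + n - 1).choose n : ℝ) * (n.factorial : ℝ) = ∏ i ∈ Finset.range n, ((M : ℝ) + i) := by
    have h := Nat.ascFactorial_eq_factorial_mul_choose' M n
    have h2 := castAsc M n
    rw [h] at h2
    push_cast at h2
    rw [mul_comm]
    exact h2
  have hp := pascal2 M n hn
  have hpr : ((M + n + 1).choose (n + 1) : ℝ)
      = ((M + n).choose n : ℝ) + ((M + n - 1).choose n : ℝ) + ((M + n - 1).choose (n + 1) : ℝ) := by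
    exact_mod_cast hp
  rw [hpr, ← hA, ← hB]
  field_simp
  ring

/-- With `L^s(a) = Y_{q−a−n}` and `a = ⌊xq⌋ − (n−1)q`, on `[n−1, n)` the normalized limit is
`2(n−x)^n/n!`; this value is strictly positive for `x < n` and vanishes at `x = n`. -/
theorem stmt13 (p n : ℕ) (hp : p.Prime) (hn : 1 ≤ n)
    (x : ℝ) (hx1 : (n : ℝ) - 1 ≤ x) (hx2 : x < (n : ℝ)) :
    Filter.Tendsto
      (fun s : ℕ =>
        Yfun n ((p : ℤ) ^ s - (⌊x * (p : ℝ) ^ s⌋ - ((n : ℤ) - 1) * (p : ℤ) ^ s) - (n : ℤ))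
          / ((p : ℝ) ^ s) ^ n)
      Filter.atTop (nhds (2 * ((n : ℝ) - x) ^ n / (n.factorial : ℝ))) ∧
    0 < 2 * ((n : ℝ) - x) ^ n / (n.factorial : ℝ) ∧
    2 * ((n : ℝ) - (n : ℝ)) ^ n / (n.factorial : ℝ) = 0 := by
  have hp1 : (1 : ℝ) < (p : ℝ) := by exact_mod_cast hp.one_lt
  have hfac : (0 : ℝ) < (n.factorial : ℝ) := by exact_mod_cast n.factorial_pos
  refine ⟨?_, ?_, ?_⟩
  · set q : ℕ → ℝ := fun s => (p : ℝ) ^ s with hqdef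
    have hqpos : ∀ s, 0 < q s := fun s => pow_pos (by linarith) s
    have hqt : Tendsto q atTop atTop := tendsto_pow_atTop_atTop_of_one_lt hp1
    set m : ℕ → ℤ := fun s => (n : ℤ) * (p : ℤ) ^ s - ⌊x * (p : ℝ) ^ s⌋ - n with hmdef
    have harg : ∀ s, (p : ℤ) ^ s - (⌊x * (p : ℝ) ^ s⌋ - ((n : ℤ) - 1) * (p : ℤ) ^ s) - (n : ℤ)
        = m s := by intro s; simp only [hmdef]; ring
    have hmr : ∀ s, (m s : ℝ) = (n : ℝ) * q s - (⌊x * q s⌋ : ℝ) - n := by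
      intro s; simp only [hmdef, hqdef]; push_cast; ring
    -- floor / q → x
    have hinv : Tendsto (fun s => 1 / q s) atTop (nhds 0) := tendsto_const_nhds.div_atTop hqt
    have hfl : Tendsto (fun s => (⌊x * q s⌋ : ℝ) / q s) atTop (nhds x) := by
      have hlow : Tendsto (fun s => x - 1 / q s) atTop (nhds x) := by
        simpa using (tendsto_const_nhds (x := x) (f := atTop)).sub hinv
      refine tendsto_of_tendsto_of_tendsto_of_le_of_le hlow tendsto_const_nhds ?_ ?_
      · intro s
        have h1 : x * q s - 1 ≤ (⌊x * q s⌋ : ℝ) := (Int.sub_one_lt_floor _).le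
        have h2 : (x * q s - 1) / q s ≤ (⌊x * q s⌋ : ℝ) / q s := by gcongr
        have h3 : (x * q s - 1) / q s = x - 1 / q s := by
          rw [sub_div, mul_div_cancel_right₀ _ (hqpos s).ne']
        linarith
      · intro s
        have h1 : (⌊x * q s⌋ : ℝ) ≤ x * q s := Int.floor_le _
        calc (⌊x * q s⌋ : ℝ) / q s ≤ x * q s / q s := by gcongr
          _ = x := mul_div_cancel_right₀ _ (hqpos s).ne'
    have hr : Tendsto (fun s => (m s : ℝ) / q s) atTop (nhds ((n : ℝ) - x)) := by
      have heq : (fun s => (m s : ℝ) / q s)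
          = fun s => (n : ℝ) - (⌊x * q s⌋ : ℝ) / q s - (n : ℝ) * (1 / q s) := by
        funext s
        rw [hmr s]
        field_simp
        rw [sub_div, sub_div, mul_div_cancel_right₀ _ (hqpos s).ne']
      rw [heq]
      have := ((tendsto_const_nhds (x := (n : ℝ)) (f := atTop)).sub hfl).sub
        (hinv.const_mul (n : ℝ))
      simpa using this
    have hc : ∀ c : ℝ, Tendsto (fun s => ((m s : ℝ) + c) / q s) atTop (nhds ((n : ℝ) - x)) := by
      intro c
      have h1 : Tendsto (fun s => c / q s) atTop (nhds 0) := tendsto_const_nhds.div_atTop hqt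
      have := hr.add h1
      simpa [add_div] using this
    have hP1 : Tendsto (fun s => ∏ i ∈ Finset.range n, (((m s : ℝ) + 1 + i) / q s)) atTop
        (nhds (((n : ℝ) - x) ^ n)) := by
      have := tendsto_finset_prod (f := fun (i : ℕ) s => ((m s : ℝ) + (1 + i)) / q s)
        (a := fun _ => (n : ℝ) - x) (Finset.range n) (fun i _ => hc (1 + i))
      simpa [Finset.prod_const, add_assoc] using this
    have hP2 : Tendsto (fun s => ∏ i ∈ Finset.range n, (((m s : ℝ) + i) / q s)) atTop
        (nhds (((n : ℝ) - x) ^ n)) := by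
      have := tendsto_finset_prod (f := fun (i : ℕ) s => ((m s : ℝ) + i) / q s)
        (a := fun _ => (n : ℝ) - x) (Finset.range n) (fun i _ => hc i)
      simpa [Finset.prod_const] using this
    have hg : Tendsto (fun s =>
        ((∏ i ∈ Finset.range n, (((m s : ℝ) + 1 + i) / q s))
          + ∏ i ∈ Finset.range n, (((m s : ℝ) + i) / q s)) / (n.factorial : ℝ)) atTop
        (nhds (2 * ((n : ℝ) - x) ^ n / (n.factorial : ℝ))) := by
      have := (hP1.add hP2).div_const (n.factorial : ℝ)
      convert this using 2
      ring
    -- eventual positivity of m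
    have hm0 : ∀ᶠ s in atTop, 0 ≤ m s := by
      have hpos : ∀ᶠ s in atTop, 0 < (m s : ℝ) / q s :=
        hr.eventually (eventually_gt_nhds (by linarith))
      filter_upwards [hpos] with s hs
      have : 0 < (m s : ℝ) := by
        by_contra h
        push_neg at h
        have := div_nonpos_of_nonpos_of_nonneg h (hqpos s).le
        linarith
      exact_mod_cast this.le
    -- eventual equality
    have heq : ∀ᶠ s in atTop,
        ((∏ i ∈ Finset.range n, (((m s : ℝ) + 1 + i) / q s))
          + ∏ i ∈ Finset.range n, (((m s : ℝ) + i) / q s)) / (n.factorial : ℝ)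
        = Yfun n ((p : ℤ) ^ s - (⌊x * (p : ℝ) ^ s⌋ - ((n : ℤ) - 1) * (p : ℤ) ^ s) - (n : ℤ))
            / ((p : ℝ) ^ s) ^ n := by
      filter_upwards [hm0] with s hs
      rw [harg s]
      have hM : (((m s).toNat : ℕ) : ℝ) = (m s : ℝ) := by
        exact_mod_cast Int.toNat_of_nonneg hs
      rw [Yfun, if_pos hs, key (m s).toNat n hn, hM]
      have hqe : ((p : ℝ) ^ s) ^ n = (q s) ^ n := rfl
      rw [hqe]
      rw [Finset.prod_div_distrib, Finset.prod_div_distrib, Finset.prod_const,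
        Finset.card_range, ← add_div, div_div, div_div, mul_comm]
    exact hg.congr' heq
  · have h1 : 0 < ((n : ℝ) - x) ^ n := pow_pos (by linarith) n
    positivity
  · rw [sub_self, zero_pow (by omega : n ≠ 0)]
    simp
end
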